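/- arXiv:2006.01695 — 2 statements merged into one kernel-verified Lean document; each statement's English description precedes it below -/
import Mathlib

section
/- For the left-degenerate unlabeled binary tree t_n with n >= 2 leaves (defined by t_1 = a, t_n = a(t_{n-1}, a)), and any k >= 1, the k-th order label-shape entropy satisfies H_k(t_n) = log2(n) + (n-1)*log2(n/(n-1)) <= log2(n) + log2(e). -/
/-- Labeled binary trees: every node has 0 or 2 children. -/
inductive LBT (σ : Type) where
  | leaf (a : σ) : LBT σ
  | node (a : σ) (l r : LBT σ) : LBT σ

/-- List of (history, label, degree) triples of a binary tree, one per node.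
The history records alternately labels and direction bits (`false` = left). -/
def ldata {σ} (hist : List (σ × Bool)) : LBT σ → List (List (σ × Bool) × σ × ℕ)
  | .leaf a => [(hist, a, 0)]
  | .node a l r =>
      (hist, a, 2) :: (ldata (hist ++ [(a, false)]) l ++ ldata (hist ++ [(a, true)]) r)

/-- Last `k` entries of a list. -/
def lastN {α} (k : ℕ) (l : List α) : List α := l.drop (l.length - k)

/-- Generic empirical entropy in per-node form: for each node `e` of `D` we add
`log2 (#{e' | cond e' = cond e} / #{e' | cond e' = cond e ∧ val e' = val e})`.
Grouping nodes by the pair `(cond, val)` recovers the usual form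
`∑_z ∑_w m_{z,w} log2 (m_z / m_{z,w})`. -/
noncomputable def entropySum {α β γ : Type*} [DecidableEq β] [DecidableEq γ]
    (D : List α) (cond : α → β) (val : α → γ) : ℝ :=
  (D.map (fun e => Real.logb 2
    ((D.countP (fun e' => decide (cond e' = cond e)) : ℝ) /
     (D.countP (fun e' => decide (cond e' = cond e ∧ val e' = val e)) : ℝ)))).sum

/-- `k`-history of a node given its full history: the last `k` entries after
padding on the left with `(box, false)`. -/
def kHist {σ} (box : σ) (k : ℕ) (h : List (σ × Bool)) : List (σ × Bool) :=
  lastN k (List.replicate k (box, false) ++ h)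

/-- `k`-label-history given the list of ancestor labels (padded with `box`). -/
def kLabHist {σ} (box : σ) (k : ℕ) (h : List σ) : List σ :=
  lastN k (List.replicate k box ++ h)

/-- `k`-th order label-shape entropy of a labeled binary tree. -/
noncomputable def Hls {σ} [DecidableEq σ] (box : σ) (k : ℕ) (t : LBT σ) : ℝ :=
  entropySum (ldata [] t) (fun e => kHist box k e.1) (fun e => e.2)

/-- The left-degenerate unlabeled binary tree with `n` leaves:
`t 1 = a`, `t (n+1) = a(t n, a)`.  (The label alphabet is `Unit`.) -/
def ldeg : ℕ → LBT Unit
  | 0 => .leaf ()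
  | 1 => .leaf ()
  | n + 1 => .node () (ldeg n) (.leaf ())

/-!
In `t_n` the internal nodes and the bottom leaf all lie on the left spine, so their `k`-history is
`(a0)^k`; the other `n - 1` leaves are right children of spine nodes, with `k`-history
`(a0)^(k-1) a1`. The first class has `n` nodes, `n - 1` of degree 2 and one of degree 0, and the
second class is pure, which gives the closed form. The bound is `log x ≤ x - 1` at
`x = n / (n - 1)`.
-/

open Real List

lemma entropySum_eq_entropySum_map {α β γ : Type*} [DecidableEq β] [DecidableEq γ]
    (D : List α) (cond : α → β) (val : α → γ) :
    entropySum D cond val = entropySum (D.map fun e => (cond e, val e)) Prod.fst Prod.snd := by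
  simp only [entropySum, map_map, countP_map, Function.comp_def]

lemma entropySum_two_histories {β γ : Type*} [DecidableEq β] [DecidableEq γ]
    {z₀ z₁ : β} {w₀ w₁ w₂ : γ} (hz : z₀ ≠ z₁) (hw : w₂ ≠ w₀) (m m' : ℕ) :
    entropySum (replicate m (z₀, w₂) ++ (z₀, w₀) :: replicate m' (z₁, w₁)) Prod.fst Prod.snd =
      logb 2 (m + 1) + m * logb 2 ((m + 1) / m) := by
  simp only [entropySum, map_append, map_replicate, map_cons, countP_append, countP_cons,
    countP_replicate, sum_append, sum_cons, sum_replicate, decide_eq_true_eq]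
  have pure_class : (m' : ℝ) * logb 2 (m' / m') = 0 := by
    rcases eq_or_ne (m' : ℝ) 0 with h | h <;> simp [h]
  simp [hz, hz.symm, hw, hw.symm, pure_class, add_comm]

section kHist

variable {σ : Type} (box : σ) (k : ℕ)

lemma kHist_replicate (d : ℕ) :
    kHist box k (replicate d (box, false)) = replicate k (box, false) := by
  simp [kHist, lastN, drop_replicate]

lemma kHist_replicate_append_singleton (hk : 1 ≤ k) (d : ℕ) (x : σ × Bool) :
    kHist box k (replicate d (box, false) ++ [x]) = replicate (k - 1) (box, false) ++ [x] := by
  simp only [kHist, lastN, ← append_assoc, ← replicate_add, length_append, length_replicate,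
    length_singleton]
  rw [drop_append, drop_replicate, length_replicate, show k + d + 1 - k - (k + d) = 0 by omega,
    show k + d - (k + d + 1 - k) = k - 1 by omega]
  rfl

end kHist

lemma map_kHist_ldata_ldeg {k : ℕ} (hk : 1 ≤ k) (m d : ℕ) :
    (ldata (replicate d ((), false)) (ldeg (m + 1))).map (fun e => (kHist () k e.1, e.2)) =
      replicate m (replicate k ((), false), (), 2) ++
        (replicate k ((), false), (), 0) ::
          replicate m (replicate (k - 1) ((), false) ++ [((), true)], (), 0) := by
  induction m generalizing d with
  | zero => simp [ldeg, ldata, kHist_replicate]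
  | succ m ih =>
    have spine : replicate d ((), false) ++ [((), false)] = replicate (d + 1) ((), false) :=
      (replicate_succ' ..).symm
    simp only [ldeg, ldata, map_cons, map_append, map_nil, spine, ih, kHist_replicate,
      kHist_replicate_append_singleton () k hk]
    rw [replicate_succ, replicate_succ' (n := m)]
    simp

lemma Hls_ldeg_succ {k : ℕ} (hk : 1 ≤ k) (m : ℕ) :
    Hls () k (ldeg (m + 1)) = logb 2 (m + 1) + m * logb 2 ((m + 1) / m) := by
  have histories_ne : replicate k ((), false) ≠ replicate (k - 1) ((), false) ++ [((), true)] := by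
    intro h
    simpa using congrArg (((), true) ∈ ·) h
  rw [Hls, entropySum_eq_entropySum_map, ← replicate_zero, map_kHist_ldata_ldeg hk]
  exact entropySum_two_histories histories_ne (by simp) m m

lemma mul_log_add_one_div_self_le_one {y : ℝ} (hy : 0 ≤ y) : y * log ((y + 1) / y) ≤ 1 := by
  rcases hy.eq_or_lt with rfl | hy
  · simp
  calc y * log ((y + 1) / y) ≤ y * ((y + 1) / y - 1) :=
        mul_le_mul_of_nonneg_left (log_le_sub_one_of_pos (by positivity)) hy.le
    _ = 1 := by field_simp; ring

lemma mul_logb_add_one_div_self_le_logb_exp_one {y : ℝ} (hy : 0 ≤ y) :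
    y * logb 2 ((y + 1) / y) ≤ logb 2 (exp 1) := by
  rw [logb, logb, log_exp, mul_div_assoc']
  gcongr
  exact mul_log_add_one_div_self_le_one hy

/-- For the left-degenerate binary tree with `n ≥ 2` leaves and any `k ≥ 1`,
`H_k(t_n) = log2 n + (n-1) log2 (n/(n-1)) ≤ log2 n + log2 e`. -/
theorem Hls_ldeg (n k : ℕ) (hn : 2 ≤ n) (hk : 1 ≤ k) :
    Hls () k (ldeg n) =
      Real.logb 2 n + ((n : ℝ) - 1) * Real.logb 2 ((n : ℝ) / ((n : ℝ) - 1)) ∧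
    Hls () k (ldeg n) ≤ Real.logb 2 n + Real.logb 2 (Real.exp 1) := by
  obtain ⟨m, rfl⟩ : ∃ m, n = m + 1 := ⟨n - 1, by omega⟩
  push_cast
  rw [add_sub_cancel_right, Hls_ldeg_succ hk]
  exact ⟨rfl, add_le_add_right (mul_logb_add_one_div_self_le_logb_exp_one m.cast_nonneg) _⟩
end

section
/- For every labeled binary tree t and every k >= 0, the k-th order label-shape entropy satisfies H_k(t) <= H^ell_k(t) + H^{ell,deg}_k(t). -/
/-- `k`-th order label entropy of a labeled binary tree. -/
noncomputable def HlB {σ} [DecidableEq σ] (box : σ) (k : ℕ) (t : LBT σ) : ℝ :=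
  entropySum (ldata [] t) (fun e => kLabHist box k (e.1.map Prod.fst)) (fun e => e.2.1)

/-- `k`-th order label-degree entropy of a labeled binary tree. -/
noncomputable def HldB {σ} [DecidableEq σ] (box : σ) (k : ℕ) (t : LBT σ) : ℝ :=
  entropySum (ldata [] t)
    (fun e => (kLabHist box k (e.1.map Prod.fst), e.2.1)) (fun e => e.2.2)

/-- `k`-th order degree-label entropy of a labeled binary tree. -/
noncomputable def HdlB {σ} [DecidableEq σ] (box : σ) (k : ℕ) (t : LBT σ) : ℝ :=
  entropySum (ldata [] t)
    (fun e => (kLabHist box k (e.1.map Prod.fst), e.2.2)) (fun e => e.2.1)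

/-- Degree entropy of a labeled binary tree: `∑_i n_i log2(|t|/n_i)`. -/
noncomputable def HdegB {σ} [DecidableEq σ] (t : LBT σ) : ℝ :=
  entropySum (ldata [] t) (fun _ => ()) (fun e => e.2.2)

/-! Read `entropySum D c v` as `|D|` times the empirical conditional entropy `H(v | c)`. Then
`H_k(t) = H((a, i) | z)` for the k-history `z`, while by the chain rule
`H^ℓ_k(t) + H^{ℓ,deg}_k(t) = H(a | y) + H(i | y, a) = H((a, i) | y)` for the k-label-history
`y = f z`. Conditioning on a coarser key can only increase entropy: with `m` counting nodes by
`z` and `n` by `y`, the termwise bound `log x ≤ x - 1` reduces this to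
`∑_{(b,c)} m_b n_{f b,c} / n_{f b} ≤ |D|`, which holds because `∑_c n_{w,c} = n_w` and
`∑_b m_b = |D|`. -/

open Real

namespace List

variable {α β γ : Type*} [DecidableEq β]

def keyCount (D : List α) (k : α → β) (x : β) : ℕ :=
  D.countP fun e => k e = x

theorem keyCount_pos {D : List α} {e : α} (he : e ∈ D) (k : α → β) : 0 < D.keyCount k (k e) :=
  countP_pos_iff.mpr ⟨e, he, decide_eq_true rfl⟩

theorem keyCount_eq_sum_keyCount_prod [DecidableEq γ] (D : List α) (k₁ : α → β) (k₂ : α → γ)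
    {V : Finset γ} (hV : ∀ e ∈ D, k₂ e ∈ V) (x : β) :
    D.keyCount k₁ x = ∑ y ∈ V, D.keyCount (fun e => (k₁ e, k₂ e)) (x, y) := by
  induction D with
  | nil => simp [keyCount]
  | cons e D ih =>
    rw [forall_mem_cons] at hV
    simp only [keyCount, countP_cons] at ih ⊢
    rw [ih hV.2, Finset.sum_add_distrib]
    by_cases hx : k₁ e = x <;> simp [hx, hV.1]

theorem keyCount_eq_count_map (D : List α) (k : α → β) (x : β) :
    D.keyCount k x = (D.map k).count x := by
  simp only [keyCount, count, countP_map, Function.comp_def]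
  rfl

theorem sum_keyCount_eq_length (D : List α) (k : α → β) :
    ∑ x ∈ (D.map k).toFinset, D.keyCount k x = D.length := by
  simp only [keyCount_eq_count_map, sum_toFinset_count_eq_length, length_map]

theorem sum_map_div_keyCount (D : List α) (k : α → β) (F : β → ℝ) :
    (D.map fun e => F (k e) / D.keyCount k (k e)).sum = ∑ x ∈ (D.map k).toFinset, F x := by
  have hmap : (D.map fun e => F (k e) / D.keyCount k (k e)) =
      (D.map k).map fun x => F x / D.keyCount k x := by
    rw [map_map]
    rfl
  rw [hmap, Finset.sum_list_map_count]
  refine Finset.sum_congr rfl fun x hx => ?_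
  have : ((D.map k).count x : ℝ) ≠ 0 := by
    exact_mod_cast (count_pos_iff.mpr (mem_toFinset.mp hx)).ne'
  rw [keyCount_eq_count_map, nsmul_eq_mul, mul_div_cancel₀ _ this]

end List

/-- The right side is a quantity divided by `b` because in `entropySum_le_entropySum_comp`,
`b` is the count by which `List.sum_map_div_keyCount` groups. -/
theorem logb_div_sub_logb_div_le {a b a' b' : ℝ} (ha : 0 < a) (hb : 0 < b) (ha' : 0 < a')
    (hb' : 0 < b') : logb 2 (a / b) - logb 2 (a' / b') ≤ (a * b' / a' - b) / log 2 / b := by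
  have hlog := log_le_sub_one_of_pos (show 0 < a / b / (a' / b') by positivity)
  rw [show a / b / (a' / b') - 1 = (a * b' / a' - b) / b by field_simp] at hlog
  rw [← logb_div (by positivity) (by positivity), logb]
  exact (div_le_div_of_nonneg_right hlog (log_nonneg one_le_two)).trans_eq (div_right_comm _ _ _)

section EntropySum

variable {α β β' γ δ : Type*} [DecidableEq β] [DecidableEq γ]

theorem entropySum_eq_sum_logb_keyCount (D : List α) (c : α → β) (v : α → γ) :
    entropySum D c v = (D.map fun e => logb 2
      (D.keyCount c (c e) / D.keyCount (fun e => (c e, v e)) (c e, v e))).sum := by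
  simp only [entropySum, List.keyCount, Prod.mk.injEq]

theorem entropySum_chain_rule [DecidableEq δ] (D : List α) (c : α → β) (v₁ : α → γ)
    (v₂ : α → δ) :
    entropySum D c (fun e => (v₁ e, v₂ e)) =
      entropySum D c v₁ + entropySum D (fun e => (c e, v₁ e)) v₂ := by
  simp only [entropySum_eq_sum_logb_keyCount, ← List.sum_map_add]
  congr 1
  refine List.map_congr_left fun e he => ?_
  have hassoc : D.keyCount (fun e => (c e, v₁ e, v₂ e)) (c e, v₁ e, v₂ e) =
      D.keyCount (fun e => ((c e, v₁ e), v₂ e)) ((c e, v₁ e), v₂ e) := by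
    simp only [List.keyCount, Prod.mk.injEq, and_assoc]
  rw [hassoc, logb_div, logb_div, logb_div]
  · ring
  all_goals exact_mod_cast (List.keyCount_pos he _).ne'

theorem sum_keyCount_mul_div_le_length [DecidableEq β'] (D : List α) (z : α → β)
    (v : α → γ) (f : β → β') :
    ∑ p ∈ (D.map fun e => (z e, v e)).toFinset,
      (D.keyCount z p.1 * D.keyCount (fun e => (f (z e), v e)) (f p.1, p.2) /
        D.keyCount (fun e => f (z e)) (f p.1) : ℝ) ≤ D.length := by
  set U := (D.map z).toFinset
  set V := (D.map v).toFinset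
  have hsub : (D.map fun e => (z e, v e)).toFinset ⊆ U ×ˢ V := by
    intro p hp
    simp only [List.mem_toFinset, List.mem_map, Finset.mem_product, U, V] at hp ⊢
    obtain ⟨e, he, rfl⟩ := hp
    exact ⟨⟨e, he, rfl⟩, e, he, rfl⟩
  have fiber (b : β) : ∑ c ∈ V, (D.keyCount (fun e => (f (z e), v e)) (f b, c) : ℝ) =
      D.keyCount (fun e => f (z e)) (f b) := by
    rw [List.keyCount_eq_sum_keyCount_prod D _ v (V := V)
      fun e he => List.mem_toFinset.mpr (List.mem_map_of_mem he)]
    push_cast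
    rfl
  have fiber_ne_zero (b : β) (hb : b ∈ U) : (D.keyCount (fun e => f (z e)) (f b) : ℝ) ≠ 0 := by
    obtain ⟨e, he, rfl⟩ := List.mem_map.mp (List.mem_toFinset.mp hb)
    exact_mod_cast (List.keyCount_pos he (fun e => f (z e))).ne'
  calc _ ≤ ∑ p ∈ U ×ˢ V, (D.keyCount z p.1 * D.keyCount (fun e => (f (z e), v e)) (f p.1, p.2) /
          D.keyCount (fun e => f (z e)) (f p.1) : ℝ) :=
        Finset.sum_le_sum_of_subset_of_nonneg hsub fun _ _ _ => by positivity
    _ = ∑ b ∈ U, (D.keyCount z b : ℝ) := by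
        rw [Finset.sum_product]
        refine Finset.sum_congr rfl fun b hb => ?_
        simp only [← Finset.sum_div, ← Finset.mul_sum, fiber]
        exact mul_div_cancel_right₀ _ (fiber_ne_zero b hb)
    _ = D.length := by exact_mod_cast List.sum_keyCount_eq_length D z

theorem entropySum_le_entropySum_comp [DecidableEq β'] (D : List α) (z : α → β) (v : α → γ)
    (f : β → β') : entropySum D z v ≤ entropySum D (fun e => f (z e)) v := by
  set m := D.keyCount fun e => (z e, v e)
  set F : β × γ → ℝ := fun p => D.keyCount z p.1 *
    D.keyCount (fun e => (f (z e), v e)) (f p.1, p.2) / D.keyCount (fun e => f (z e)) (f p.1)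
  have hexcess : (D.map fun e => (F (z e, v e) - m (z e, v e)) / log 2 / m (z e, v e)).sum ≤ 0 :=
    calc _ = ∑ p ∈ (D.map fun e => (z e, v e)).toFinset, (F p - m p) / log 2 :=
          List.sum_map_div_keyCount D _ fun p => (F p - m p) / log 2
      _ ≤ 0 := by
          rw [← Finset.sum_div, Finset.sum_sub_distrib]
          refine div_nonpos_of_nonpos_of_nonneg (sub_nonpos.mpr ?_) (log_nonneg one_le_two)
          have hlen : ∑ p ∈ (D.map fun e => (z e, v e)).toFinset, (m p : ℝ) = D.length := by
            exact_mod_cast List.sum_keyCount_eq_length D _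
          rw [hlen]
          exact sum_keyCount_mul_div_le_length D z v f
  rw [entropySum_eq_sum_logb_keyCount, entropySum_eq_sum_logb_keyCount]
  refine (List.sum_le_sum fun e he => ?_).trans
    (List.sum_map_add.trans_le (add_le_of_nonpos_right hexcess))
  rw [← sub_le_iff_le_add']
  exact logb_div_sub_logb_div_le (by exact_mod_cast List.keyCount_pos he _)
    (by exact_mod_cast List.keyCount_pos he _) (by exact_mod_cast List.keyCount_pos he _)
    (by exact_mod_cast List.keyCount_pos he _)

end EntropySum

theorem kLabHist_map_fst {σ : Type*} (box : σ) (k : ℕ) (h : List (σ × Bool)) :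
    kLabHist box k (h.map Prod.fst) = (kHist box k h).map Prod.fst := by
  simp only [kLabHist, kHist, lastN, List.map_drop, List.map_append, List.map_replicate,
    List.length_append, List.length_replicate, List.length_map]

/-- For every labeled binary tree `t` and every `k ≥ 0`,
`H_k(t) ≤ H^ℓ_k(t) + H^{ℓ,deg}_k(t)`. -/
theorem Hls_le_HlB_add_HldB {σ : Type} [DecidableEq σ] (box : σ) (k : ℕ) (t : LBT σ) :
    Hls box k t ≤ HlB box k t + HldB box k t := by
  simp only [HlB, HldB, kLabHist_map_fst]
  rw [← entropySum_chain_rule]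
  exact entropySum_le_entropySum_comp (ldata [] t) (fun e => kHist box k e.1) (fun e => e.2)
    (List.map Prod.fst)
end
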